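/- Let 1/2 < α < 1, Ω the sector of radius 1 and angle π/α, and u(r,θ) = (r^{-α} - r^{α}) sin(αθ). For every p with 1 ≤ p < 2/(α+1), both u and its gradient ∇u belong to L^p(Ω); i.e. ∫_Ω |u|^p < ∞ and ∫_Ω |∇u|^p < ∞. -/

import Mathlib

open Real Set Filter Topology MeasureTheory
open scoped ENNReal

noncomputable section

/-- the open circular sector of radius 1 and opening angle π/α. -/
def sector (α : ℝ) : Set (ℝ × ℝ) :=
  {p | ∃ r θ : ℝ, 0 < r ∧ r < 1 ∧ 0 < θ ∧ θ < π / α ∧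
    p = (r * Real.cos θ, r * Real.sin θ)}

/-- polar angle in `[0, 2π)`. -/
def angleOf (p : ℝ × ℝ) : ℝ :=
  if 0 ≤ Complex.arg (p.1 + p.2 * Complex.I) then Complex.arg (p.1 + p.2 * Complex.I)
  else Complex.arg (p.1 + p.2 * Complex.I) + 2 * π

/-- polar radius. -/
def radOf (p : ℝ × ℝ) : ℝ := Real.sqrt (p.1 ^ 2 + p.2 ^ 2)

/-- `u(r,θ) = (r^{-α} - r^{α}) sin(α θ)` in Cartesian coordinates. -/
def uex (α : ℝ) (p : ℝ × ℝ) : ℝ :=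
  (radOf p ^ (-α) - radOf p ^ α) * Real.sin (α * angleOf p)

/-- first partial derivatives -/
def pd1 (u : ℝ × ℝ → ℝ) (p : ℝ × ℝ) : ℝ := deriv (fun t => u (t, p.2)) p.1
def pd2 (u : ℝ × ℝ → ℝ) (p : ℝ × ℝ) : ℝ := deriv (fun t => u (p.1, t)) p.2

/-- second partial derivatives -/
def pd11 (u : ℝ × ℝ → ℝ) (p : ℝ × ℝ) : ℝ :=
  deriv (fun s => deriv (fun t => u (t, p.2)) s) p.1
def pd22 (u : ℝ × ℝ → ℝ) (p : ℝ × ℝ) : ℝ :=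
  deriv (fun s => deriv (fun t => u (p.1, t)) s) p.2

/-- Euclidean norm of the gradient -/
def gradNorm (u : ℝ × ℝ → ℝ) (p : ℝ × ℝ) : ℝ :=
  Real.sqrt ((pd1 u p) ^ 2 + (pd2 u p) ^ 2)

end

/-!
Both `|u|` and `|∇u|` are `O(r^{-α-1})` on the sector, and `r^{-(α+1)p}` is integrable near the
origin of the plane exactly when `(α+1)p < 2`.

For the gradient, write `u = (R^{-α} - R^α) sin(αΘ)` along a coordinate line, with `R`, `Θ` the
polar coordinates. Away from the real axis `Θ` is, locally, the imaginary part of a branch of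
`log`, so `|R'| ≤ 1` and `R |Θ'| ≤ 1`; factoring out `α R^{-α-1}` then bounds the derivative by
`3α R^{-α-1}`. The gradient is only estimated off the real axis, a null set.
-/

local notation "toℂ" => Complex.equivRealProdCLM.symm

lemma setLIntegral_rpow_lt_top_of_le_norm_rpow {E : Type*} [NormedAddCommGroup E]
    [NormedSpace ℝ E] [FiniteDimensional ℝ E] [MeasurableSpace E] [BorelSpace E]
    {μ : Measure E} [μ.IsAddHaarMeasure] (hd : 1 ≤ Module.finrank ℝ E) {S : Set E} {r : ℝ}
    (hS : S ⊆ Metric.ball 0 r) {f : E → ℝ} {C β p : ℝ} (hC : 0 ≤ C) (hp : 0 ≤ p)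
    (hpβ : p * β < Module.finrank ℝ E)
    (hf : ∀ᵐ x ∂μ.restrict S, 0 ≤ f x ∧ f x ≤ C * ‖x‖ ^ (-β)) :
    ∫⁻ x in S, ENNReal.ofReal (f x ^ p) ∂μ < ⊤ := by
  have hint : IntegrableOn (fun x => C ^ p * ‖x‖ ^ (-(p * β))) (Metric.ball 0 r) μ :=
    integrableOn_ball_of_norm_le_rpow hd hpβ
      (Eventually.of_forall fun x => (Real.norm_of_nonneg (by positivity)).le)
      ((measurable_norm.pow_const _).const_mul _).aestronglyMeasurable
  have hpow : ∀ᵐ x ∂μ.restrict S, f x ^ p ≤ C ^ p * ‖x‖ ^ (-(p * β)) := by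
    filter_upwards [hf] with x hx
    calc f x ^ p ≤ (C * ‖x‖ ^ (-β)) ^ p := rpow_le_rpow hx.1 hx.2 hp
      _ = C ^ p * ‖x‖ ^ (-(p * β)) := by
          rw [mul_rpow hC (by positivity), ← rpow_mul (norm_nonneg x)]
          ring_nf
  calc ∫⁻ x in S, ENNReal.ofReal (f x ^ p) ∂μ
      ≤ ∫⁻ x in S, ENNReal.ofReal (C ^ p * ‖x‖ ^ (-(p * β))) ∂μ :=
        lintegral_mono_ae (hpow.mono fun x hx => ENNReal.ofReal_le_ofReal hx)
    _ ≤ ∫⁻ x in Metric.ball 0 r, ENNReal.ofReal (C ^ p * ‖x‖ ^ (-(p * β))) ∂μ :=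
        lintegral_mono_set hS
    _ < ⊤ := hint.setLIntegral_lt_top

lemma ae_snd_ne_zero : ∀ᵐ x : ℝ × ℝ, x.2 ≠ 0 := by
  rw [ae_iff]
  simp only [ne_eq, not_not]
  rw [show {a : ℝ × ℝ | a.2 = 0} = univ ×ˢ {0} by ext; simp, Measure.volume_eq_prod,
    Measure.prod_prod, measure_singleton, mul_zero]

lemma abs_deriv_profile_le {α t R' Θ' : ℝ} {R Θ : ℝ → ℝ} (hα : 0 ≤ α)
    (hR : HasDerivAt R R' t) (hΘ : HasDerivAt Θ Θ' t) (hR0 : 0 < R t) (hR1 : R t ≤ 1)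
    (hR' : |R'| ≤ 1) (hΘ' : R t * |Θ'| ≤ 1) :
    |deriv (fun s => (R s ^ (-α) - R s ^ α) * Real.sin (α * Θ s)) t| ≤
      3 * α * R t ^ (-α - 1) := by
  have hderiv : HasDerivAt (fun s => (R s ^ (-α) - R s ^ α) * Real.sin (α * Θ s))
      ((R' * -α * R t ^ (-α - 1) - R' * α * R t ^ (α - 1)) * Real.sin (α * Θ t) +
        (R t ^ (-α) - R t ^ α) * (Real.cos (α * Θ t) * (α * Θ'))) t :=
    ((hR.rpow_const (Or.inl hR0.ne')).sub (hR.rpow_const (Or.inl hR0.ne'))).mul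
      (hΘ.const_mul α).sin
  rw [hderiv.deriv]
  set ρ := R t
  set q := ρ ^ (2 * α)
  have e1 : ρ ^ (α - 1) = ρ ^ (-α - 1) * q := by rw [← rpow_add hR0]; ring_nf
  have e2 : ρ ^ (-α) = ρ ^ (-α - 1) * ρ := by rw [← rpow_add_one hR0.ne']; ring_nf
  have e3 : ρ ^ α = ρ ^ (-α - 1) * q * ρ := by
    rw [← rpow_add hR0, ← rpow_add_one hR0.ne']; ring_nf
  have hq0 : 0 ≤ q := by positivity
  have hq1 : q ≤ 1 := rpow_le_one hR0.le hR1 (by positivity)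
  set A := -(R' * (1 + q)) with hA_def
  set B := ρ * Θ' * (1 - q) with hB_def
  have hA : |A| ≤ 2 := by
    rw [abs_neg, abs_mul, abs_of_nonneg (by linarith : 0 ≤ 1 + q)]
    nlinarith [abs_nonneg R']
  have hB : |B| ≤ 1 := by
    rw [abs_mul, abs_mul, abs_of_pos hR0, abs_of_nonneg (by linarith : 0 ≤ 1 - q)]
    nlinarith [abs_nonneg Θ']
  have hbracket : |A * Real.sin (α * Θ t) + B * Real.cos (α * Θ t)| ≤ 3 :=
    calc _ ≤ |A| * |Real.sin (α * Θ t)| + |B| * |Real.cos (α * Θ t)| := by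
          rw [← abs_mul, ← abs_mul]; exact abs_add_le _ _
      _ ≤ 2 * 1 + 1 * 1 := by gcongr <;> first | exact abs_sin_le_one _ | exact abs_cos_le_one _
      _ = 3 := by norm_num
  calc _ = |α * ρ ^ (-α - 1)| * |A * Real.sin (α * Θ t) + B * Real.cos (α * Θ t)| := by
        rw [← abs_mul, e1, e2, e3, hA_def, hB_def]; ring_nf
    _ ≤ α * ρ ^ (-α - 1) * 3 := by rw [abs_of_nonneg (by positivity)]; gcongr
    _ = 3 * α * ρ ^ (-α - 1) := by ring

lemma radOf_eq_norm (p : ℝ × ℝ) : radOf p = ‖toℂ p‖ := by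
  rw [Complex.equivRealProdCLM_symm_apply, Complex.norm_add_mul_I, radOf]

lemma angleOf_eq_arg_add (p : ℝ × ℝ) :
    angleOf p = Complex.arg (toℂ p) + if 0 ≤ p.2 then 0 else 2 * π := by
  simp only [angleOf, Complex.equivRealProdCLM_symm_apply, Complex.arg_nonneg_iff]
  split_ifs <;> simp_all

lemma norm_le_radOf (p : ℝ × ℝ) : ‖p‖ ≤ radOf p := by
  rw [Prod.norm_def, radOf]
  exact max_le (abs_le_sqrt (by nlinarith)) (abs_le_sqrt (by nlinarith))

lemma rpow_radOf_le_rpow_norm {p : ℝ × ℝ} (hp : 0 < radOf p) {β : ℝ} (hβ : β ≤ 0) :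
    radOf p ^ β ≤ ‖p‖ ^ β := by
  refine rpow_le_rpow_of_nonpos (norm_pos_iff.2 ?_) (norm_le_radOf p) hβ
  rintro rfl
  simp [radOf] at hp

lemma radOf_polar {r : ℝ} (hr : 0 ≤ r) (θ : ℝ) : radOf (r * cos θ, r * sin θ) = r := by
  rw [radOf, show (r * cos θ) ^ 2 + (r * sin θ) ^ 2 = r ^ 2 by
    linear_combination r ^ 2 * sin_sq_add_cos_sq θ, sqrt_sq hr]

lemma angleOf_polar {r θ : ℝ} (hr : 0 < r) (hθ : θ ∈ Ioo 0 (2 * π)) :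
    angleOf (r * cos θ, r * sin θ) = θ := by
  have hpolar : ∀ φ, cos φ = cos θ → sin φ = sin θ →
      toℂ (r * cos θ, r * sin θ) = r * (Complex.cos φ + Complex.sin φ * Complex.I) := by
    intro φ hc hs
    rw [Complex.equivRealProdCLM_symm_apply, ← hc, ← hs]
    push_cast
    ring
  rw [angleOf_eq_arg_add]
  rcases le_or_gt θ π with hle | hgt
  · rw [hpolar θ rfl rfl, Complex.arg_mul_cos_add_sin_mul_I hr ⟨by linarith [hθ.1, pi_pos], hle⟩,
      if_pos (mul_nonneg hr.le (sin_nonneg_of_nonneg_of_le_pi hθ.1.le hle)), add_zero]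
  · have hsin : sin θ < 0 := by
      rw [← sin_sub_two_pi]
      exact sin_neg_of_neg_of_neg_pi_lt (by linarith [hθ.2]) (by linarith)
    rw [hpolar (θ - 2 * π) (cos_sub_two_pi θ) (sin_sub_two_pi θ),
      Complex.arg_mul_cos_add_sin_mul_I hr ⟨by linarith [hθ.2], by linarith [hθ.2, pi_pos]⟩,
      if_neg (not_le.2 (mul_neg_of_pos_of_neg hr hsin))]
    ring

lemma hasDerivAt_radOf_comp {g : ℝ → ℝ × ℝ} {v : ℝ × ℝ} {t : ℝ} (hg : HasDerivAt g v t)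
    (h : g t ≠ 0) :
    HasDerivAt (fun s => radOf (g s)) (inner ℝ (toℂ (g t)) (toℂ v) / radOf (g t)) t := by
  have hz := (toℂ).hasFDerivAt.comp_hasDerivAt t hg
  have hnorm := hz.norm_sq.sqrt (by simpa using h)
  simp only [Function.comp_def, sqrt_sq (norm_nonneg _), ContinuousLinearEquiv.coe_coe,
    mul_div_mul_left _ _ (two_ne_zero' ℝ)] at hnorm
  simpa only [radOf_eq_norm] using hnorm

lemma hasDerivAt_angleOf_comp {g : ℝ → ℝ × ℝ} {v : ℝ × ℝ} {t : ℝ} (hg : HasDerivAt g v t)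
    (h : (g t).2 ≠ 0) :
    HasDerivAt (fun s => angleOf (g s)) ((toℂ v / toℂ (g t)).im) t := by
  have hz : HasDerivAt (fun s => toℂ (g s)) (toℂ v) t := (toℂ).hasFDerivAt.comp_hasDerivAt t hg
  have hslit : toℂ (g t) ∈ Complex.slitPlane :=
    Complex.mem_slitPlane_iff.2 (Or.inr (by simpa using h))
  have harg : HasDerivAt (fun s => Complex.arg (toℂ (g s))) ((toℂ v / toℂ (g t)).im) t := by
    simpa only [Function.comp_def, Complex.imCLM_apply, Complex.log_im] using
      Complex.imCLM.hasFDerivAt.comp_hasDerivAt t (hz.clog_real hslit)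
  have hc : ContinuousAt (fun s => (g s).2) t := continuous_snd.continuousAt.comp hg.continuousAt
  have hsign : ∀ᶠ s in 𝓝 t, (0 ≤ (g s).2 ↔ 0 ≤ (g t).2) := by
    rcases h.lt_or_gt with hneg | hpos
    · filter_upwards [hc.eventually (gt_mem_nhds hneg)] with s hs
      exact iff_of_false hs.not_ge hneg.not_ge
    · filter_upwards [hc.eventually (lt_mem_nhds hpos)] with s hs
      exact iff_of_true hs.le hpos.le
  refine (harg.add_const (if 0 ≤ (g t).2 then 0 else 2 * π)).congr_of_eventuallyEq ?_
  filter_upwards [hsign] with s hs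
  rw [angleOf_eq_arg_add, if_congr hs rfl rfl]

lemma abs_deriv_uex_comp_le {α t : ℝ} {g : ℝ → ℝ × ℝ} {v : ℝ × ℝ} (hα : 0 ≤ α)
    (hg : HasDerivAt g v t) (hv : ‖toℂ v‖ ≤ 1) (h2 : (g t).2 ≠ 0) (h1 : radOf (g t) ≤ 1) :
    |deriv (fun s => uex α (g s)) t| ≤ 3 * α * radOf (g t) ^ (-α - 1) := by
  have hgt : g t ≠ 0 := fun h => h2 (by simp [h])
  have hz : ‖toℂ (g t)‖ ≠ 0 := by simpa using hgt
  have hR0 : 0 < radOf (g t) := by rw [radOf_eq_norm]; positivity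
  refine abs_deriv_profile_le hα (hasDerivAt_radOf_comp hg hgt) (hasDerivAt_angleOf_comp hg h2)
    hR0 h1 ?_ ?_
  · rw [abs_div, abs_of_pos hR0, div_le_one hR0, radOf_eq_norm]
    exact (abs_real_inner_le_norm _ _).trans (mul_le_of_le_one_right (norm_nonneg _) hv)
  · calc radOf (g t) * |(toℂ v / toℂ (g t)).im| ≤ ‖toℂ (g t)‖ * ‖toℂ v / toℂ (g t)‖ := by
          rw [radOf_eq_norm]; gcongr; exact Complex.abs_im_le_norm _
      _ = ‖toℂ v‖ := by rw [norm_div, mul_div_cancel₀ _ hz]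
      _ ≤ 1 := hv

lemma gradNorm_uex_le {α : ℝ} {p : ℝ × ℝ} (hα : 0 ≤ α) (h2 : p.2 ≠ 0) (h1 : radOf p ≤ 1) :
    gradNorm (uex α) p ≤ 6 * α * radOf p ^ (-α - 1) := by
  have hx := abs_deriv_uex_comp_le (g := fun t => (t, p.2)) hα
    ((hasDerivAt_id p.1).prodMk (hasDerivAt_const p.1 p.2))
    (by simp [Complex.equivRealProdCLM_symm_apply]) h2 h1
  have hy := abs_deriv_uex_comp_le (g := fun t => (p.1, t)) hα
    ((hasDerivAt_const p.2 p.1).prodMk (hasDerivAt_id p.2))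
    (by simp [Complex.equivRealProdCLM_symm_apply]) h2 h1
  set M := 3 * α * radOf p ^ (-α - 1)
  have hsq : ∀ a : ℝ, |a| ≤ M → a ^ 2 ≤ M ^ 2 := fun a ha => by
    simpa only [sq_abs] using pow_le_pow_left₀ (abs_nonneg a) ha 2
  refine sqrt_le_iff.2 ⟨mul_nonneg (by positivity) (rpow_nonneg (sqrt_nonneg _) _), ?_⟩
  calc pd1 (uex α) p ^ 2 + pd2 (uex α) p ^ 2 ≤ M ^ 2 + M ^ 2 := add_le_add (hsq _ hx) (hsq _ hy)
    _ ≤ (6 * α * radOf p ^ (-α - 1)) ^ 2 := by nlinarith [sq_nonneg M]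

lemma abs_uex_le {α : ℝ} {p : ℝ × ℝ} (hα : 0 ≤ α) (h0 : 0 < radOf p) (h1 : radOf p ≤ 1) :
    |uex α p| ≤ radOf p ^ (-α - 1) := by
  have hsub : |radOf p ^ (-α) - radOf p ^ α| ≤ radOf p ^ (-α) := by
    rw [abs_of_nonneg (sub_nonneg.2 (rpow_le_rpow_of_exponent_ge h0 h1 (by linarith)))]
    linarith [rpow_nonneg h0.le α]
  calc |uex α p| = |radOf p ^ (-α) - radOf p ^ α| * |sin (α * angleOf p)| := abs_mul _ _
    _ ≤ radOf p ^ (-α) * 1 := mul_le_mul hsub (abs_sin_le_one _) (abs_nonneg _) (by positivity)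
    _ ≤ radOf p ^ (-α - 1) := by
        rw [mul_one]; exact rpow_le_rpow_of_exponent_ge h0 h1 (by linarith)

lemma sector_eq_image (α : ℝ) :
    sector α = (fun q : ℝ × ℝ => (q.1 * cos q.2, q.1 * sin q.2)) '' Ioo 0 1 ×ˢ Ioo 0 (π / α) := by
  ext p
  simp only [sector, mem_image, mem_prod, mem_Ioo, Prod.exists]
  constructor
  · rintro ⟨r, θ, hr0, hr1, hθ0, hθ1, rfl⟩
    exact ⟨r, θ, ⟨⟨hr0, hr1⟩, hθ0, hθ1⟩, rfl⟩
  · rintro ⟨r, θ, ⟨⟨hr0, hr1⟩, hθ0, hθ1⟩, rfl⟩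
    exact ⟨r, θ, hr0, hr1, hθ0, hθ1, rfl⟩

/-- Lusin–Souslin: `π / α < 2π` makes the polar map injective on the parameter rectangle. -/
lemma measurableSet_sector {α : ℝ} (hα : 1 / 2 < α) : MeasurableSet (sector α) := by
  have hπα : π / α < 2 * π := by
    rw [div_lt_iff₀ (by linarith)]
    nlinarith [pi_pos]
  rw [sector_eq_image]
  refine (measurableSet_Ioo.prod measurableSet_Ioo).image_of_continuousOn_injOn
    (by fun_prop) (LeftInvOn.injOn (f₁' := fun p => (radOf p, angleOf p)) ?_)
  rintro ⟨r, θ⟩ ⟨hr, hθ⟩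
  simp only [radOf_polar hr.1.le, angleOf_polar hr.1 ⟨hθ.1, hθ.2.trans hπα⟩]

lemma radOf_mem_Ioo_of_mem_sector {α : ℝ} {p : ℝ × ℝ} (hp : p ∈ sector α) :
    radOf p ∈ Ioo 0 1 := by
  obtain ⟨r, θ, hr0, hr1, -, -, rfl⟩ := hp
  rw [radOf_polar hr0.le]
  exact ⟨hr0, hr1⟩

lemma sector_subset_ball (α : ℝ) : sector α ⊆ Metric.ball 0 1 := fun p hp =>
  mem_ball_zero_iff.2 ((norm_le_radOf p).trans_lt (radOf_mem_Ioo_of_mem_sector hp).2)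

lemma abs_uex_le_of_mem_sector {α : ℝ} {p : ℝ × ℝ} (hα : 0 ≤ α) (hp : p ∈ sector α) :
    |uex α p| ≤ ‖p‖ ^ (-(α + 1)) := by
  obtain ⟨h0, h1⟩ := radOf_mem_Ioo_of_mem_sector hp
  rw [neg_add']
  exact (abs_uex_le hα h0 h1.le).trans (rpow_radOf_le_rpow_norm h0 (by linarith))

lemma gradNorm_uex_le_of_mem_sector {α : ℝ} {p : ℝ × ℝ} (hα : 0 ≤ α) (hp : p ∈ sector α)
    (h2 : p.2 ≠ 0) : gradNorm (uex α) p ≤ 6 * α * ‖p‖ ^ (-(α + 1)) := by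
  obtain ⟨h0, h1⟩ := radOf_mem_Ioo_of_mem_sector hp
  rw [neg_add']
  exact (gradNorm_uex_le hα h2 h1.le).trans
    (mul_le_mul_of_nonneg_left (rpow_radOf_le_rpow_norm h0 (by linarith)) (by positivity))

theorem uex_and_grad_in_Lp_general (α : ℝ) (hα1 : 1/2 < α)
    (p : ℝ) (hp1 : 1 ≤ p) (hp2 : p < 2 / (α + 1)) :
    (∫⁻ x in sector α, ENNReal.ofReal (|uex α x| ^ p)) < ⊤ ∧
    (∫⁻ x in sector α, ENNReal.ofReal ((gradNorm (uex α) x) ^ p)) < ⊤ := by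
  have hα0 : 0 ≤ α := by linarith
  have hexp : p * (α + 1) < Module.finrank ℝ (ℝ × ℝ) := by
    rw [show Module.finrank ℝ (ℝ × ℝ) = 2 by simp, Nat.cast_ofNat, ← lt_div_iff₀ (by linarith)]
    exact hp2
  have hae : ∀ᵐ x ∂volume.restrict (sector α), x ∈ sector α ∧ x.2 ≠ 0 :=
    (ae_restrict_mem (measurableSet_sector hα1)).and (ae_restrict_of_ae ae_snd_ne_zero)
  constructor
  · refine setLIntegral_rpow_lt_top_of_le_norm_rpow (C := 1) (by simp) (sector_subset_ball α)
      zero_le_one (by linarith) hexp ?_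
    filter_upwards [hae] with x hx
    exact ⟨abs_nonneg _, (abs_uex_le_of_mem_sector hα0 hx.1).trans_eq (one_mul _).symm⟩
  · refine setLIntegral_rpow_lt_top_of_le_norm_rpow (C := 6 * α) (by simp)
      (sector_subset_ball α) (by positivity) (by linarith) hexp ?_
    filter_upwards [hae] with x hx
    exact ⟨sqrt_nonneg _, gradNorm_uex_le_of_mem_sector hα0 hx.1 hx.2⟩

/-- for every `1 ≤ p < 2/(α+1)`, both `u` and `∇u` are in `L^p` of the
sector. -/
theorem uex_and_grad_in_Lp (α : ℝ) (hα1 : 1/2 < α) (hα2 : α < 1)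
    (p : ℝ) (hp1 : 1 ≤ p) (hp2 : p < 2 / (α + 1)) :
    (∫⁻ x in sector α, ENNReal.ofReal (|uex α x| ^ p)) < ⊤ ∧
    (∫⁻ x in sector α, ENNReal.ofReal ((gradNorm (uex α) x) ^ p)) < ⊤ :=
  uex_and_grad_in_Lp_general α hα1 p hp1 hp2
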